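/- arXiv:1302.4265 — 2 statements merged into one kernel-verified Lean document; each statement's English description precedes it below -/
import Mathlib

section
/- Let η > 0, k ≥ 0 and m ≥ 0. Let Λ : [0,∞) → [0,∞) be a function that is absolutely continuous on every compact subinterval of [0,∞), and let h : [0,∞) → ℝ be locally integrable with ∫_s^t h(τ) dτ ≤ η(t−s) + m for all 0 ≤ s ≤ t. If Λ'(t) + 2ηΛ(t) ≤ h(t)Λ(t) + k for almost every t ≥ 0, then for all t ≥ 0 one has Λ(t) ≤ Λ(0) e^m e^{−ηt} + k e^m / η. -/
/-!
With `B t = 2 η t - ∫₀ᵗ h`, the product `Λ e^B` is absolutely continuous on `[0, T]` with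
derivative `e^B (Λ' + (2 η - h) Λ) ≤ k e^B` almost everywhere, so `Λ T e^{B T} ≤ Λ 0 + k ∫₀ᵀ e^B`.
The hypothesis on `h` says `B x ≤ B T + m - η (T - x)` on `[0, T]`, which bounds both `e^{-B T}`
and `∫₀ᵀ e^{B - B T}` (by `e^m / η`).
-/

open MeasureTheory Set Filter

theorem AbsolutelyContinuousOnInterval.congr {X : Type*} [PseudoMetricSpace X] {f g : ℝ → X}
    {a b : ℝ} (hf : AbsolutelyContinuousOnInterval f a b) (hfg : EqOn f g (uIcc a b)) :
    AbsolutelyContinuousOnInterval g a b := by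
  refine hf.congr' ?_
  rw [EventuallyEq, eventually_inf_principal]
  filter_upwards with ⟨n, I⟩ hnI
  exact Finset.sum_congr rfl fun i hi ↦ by
    rw [hfg (hnI.1 i hi).1, hfg (hnI.1 i hi).2]

theorem LipschitzOnWith.comp_absolutelyContinuousOnInterval {X Y : Type*} [PseudoMetricSpace X]
    [PseudoMetricSpace Y] {g : X → Y} {f : ℝ → X} {K : NNReal} {s : Set X} {a b : ℝ}
    (hg : LipschitzOnWith K g s) (hfs : MapsTo f (uIcc a b) s)
    (hf : AbsolutelyContinuousOnInterval f a b) :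
    AbsolutelyContinuousOnInterval (g ∘ f) a b := by
  unfold AbsolutelyContinuousOnInterval at hf ⊢
  have hbound := hf.const_mul (K : ℝ)
  rw [mul_zero] at hbound
  refine squeeze_zero' (Eventually.of_forall fun _ ↦ Finset.sum_nonneg fun _ _ ↦ dist_nonneg)
    ?_ hbound
  rw [eventually_inf_principal]
  filter_upwards with ⟨n, I⟩ hnI
  rw [Finset.mul_sum]
  exact Finset.sum_le_sum fun i hi ↦
    hg.dist_le_mul _ (hfs (hnI.1 i hi).1) _ (hfs (hnI.1 i hi).2)

theorem ContDiff.comp_absolutelyContinuousOnInterval {g f : ℝ → ℝ} {a b : ℝ}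
    (hg : ContDiff ℝ 1 g) (hf : AbsolutelyContinuousOnInterval f a b) :
    AbsolutelyContinuousOnInterval (g ∘ f) a b := by
  obtain ⟨C, hC⟩ := hf.exists_bound
  obtain ⟨K, hK⟩ := hg.contDiffOn.exists_lipschitzOnWith one_ne_zero (convex_Icc (-C) C)
    isCompact_Icc
  exact hK.comp_absolutelyContinuousOnInterval (fun x hx ↦ abs_le.mp (hC x hx)) hf

theorem AbsolutelyContinuousOnInterval.sub_le_integral_of_ae_deriv_le {u g : ℝ → ℝ} {a b : ℝ}
    (hab : a ≤ b) (hu : AbsolutelyContinuousOnInterval u a b)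
    (hg : IntervalIntegrable g volume a b)
    (hle : ∀ᵐ x ∂volume.restrict (Icc a b), deriv u x ≤ g x) :
    u b - u a ≤ ∫ x in a..b, g x := by
  rw [← hu.integral_deriv_eq_sub]
  exact intervalIntegral.integral_mono_ae_restrict hab hu.intervalIntegrable_deriv hg hle

theorem AbsolutelyContinuousOnInterval.ae_restrict_differentiableAt {u : ℝ → ℝ} {a b : ℝ}
    (hab : a ≤ b) (hu : AbsolutelyContinuousOnInterval u a b) :
    ∀ᵐ x ∂volume.restrict (Icc a b), DifferentiableAt ℝ u x := by
  rw [ae_restrict_iff' measurableSet_Icc, ← uIcc_of_le hab]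
  exact hu.ae_differentiableAt

theorem AbsolutelyContinuousOnInterval.mul_exp_sub_le {u B : ℝ → ℝ} {a b k : ℝ} (hab : a ≤ b)
    (hu : AbsolutelyContinuousOnInterval u a b) (hB : AbsolutelyContinuousOnInterval B a b)
    (hle : ∀ᵐ x ∂volume.restrict (Icc a b), deriv u x + deriv B x * u x ≤ k) :
    u b * Real.exp (B b) - u a * Real.exp (B a) ≤ k * ∫ x in a..b, Real.exp (B x) := by
  have hE := Real.contDiff_exp.comp_absolutelyContinuousOnInterval hB
  rw [← intervalIntegral.integral_const_mul]
  refine (hu.mul hE).sub_le_integral_of_ae_deriv_le hab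
    (hE.continuousOn.intervalIntegrable.const_mul k) ?_
  filter_upwards [hle, hu.ae_restrict_differentiableAt hab, hB.ae_restrict_differentiableAt hab]
    with x hx hux hBx
  have hprod := hux.hasDerivAt.mul (Real.hasDerivAt_exp (B x) |>.comp x hBx.hasDerivAt)
  calc deriv (u * Real.exp ∘ B) x = Real.exp (B x) * (deriv u x + deriv B x * u x) := by
        rw [hprod.deriv]; simp only [Function.comp_apply]; ring
    _ ≤ Real.exp (B x) * k := by gcongr
    _ = k * Real.exp (B x) := mul_comm _ _

theorem ae_restrict_hasDerivAt_mul_sub_integral {h : ℝ → ℝ} {a b : ℝ} (c : ℝ) (hab : a ≤ b)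
    (hh : IntervalIntegrable h volume a b) :
    ∀ᵐ x ∂volume.restrict (Icc a b),
      HasDerivAt (fun y ↦ c * y - ∫ τ in a..y, h τ) (c - h x) x := by
  rw [ae_restrict_iff' measurableSet_Icc, ← uIcc_of_le hab]
  filter_upwards [hh.ae_hasDerivAt_integral] with x hx hxab
  simpa using ((hasDerivAt_id x).const_mul c).fun_sub (hx hxab a left_mem_uIcc)

theorem integral_exp_le_of_le_sub_mul {B : ℝ → ℝ} {a b c η : ℝ} (hη : 0 < η) (hab : a ≤ b)
    (hBint : IntervalIntegrable (fun x ↦ Real.exp (B x)) volume a b)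
    (hB : ∀ x ∈ Icc a b, B x ≤ c - η * (b - x)) :
    ∫ x in a..b, Real.exp (B x) ≤ Real.exp c / η := by
  have hexp : ∫ x in a..b, Real.exp (η * x) = (Real.exp (η * b) - Real.exp (η * a)) / η := by
    rw [intervalIntegral.integral_comp_mul_left (fun x ↦ Real.exp x) hη.ne', integral_exp]
    simp [div_eq_inv_mul]
  calc ∫ x in a..b, Real.exp (B x)
      ≤ ∫ x in a..b, Real.exp (c - η * b) * Real.exp (η * x) := by
        refine intervalIntegral.integral_mono_on hab hBint
          (Continuous.intervalIntegrable (by fun_prop) _ _) fun x hx ↦ ?_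
        rw [← Real.exp_add]
        exact Real.exp_le_exp.mpr ((hB x hx).trans_eq (by ring))
    _ = (Real.exp c - Real.exp (c - η * (b - a))) / η := by
        rw [intervalIntegral.integral_const_mul, hexp, mul_div_assoc', mul_sub, ← Real.exp_add,
          ← Real.exp_add]
        ring_nf
    _ ≤ Real.exp c / η := by gcongr; linarith [Real.exp_pos (c - η * (b - a))]

/-- Absolute continuity of `Λ` on compact subintervals of `[0, ∞)` is encoded by an a.e.
derivative `Λ'` that is locally integrable and integrates back to `Λ`. -/
theorem gronwall_type_inequality_general
    (η k m : ℝ) (hη : 0 < η) (hk : 0 ≤ k)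
    (Λ Λ' h : ℝ → ℝ)
    (hΛnonneg : ∀ t, 0 ≤ t → 0 ≤ Λ t)
    (hΛ'int : ∀ t, 0 ≤ t → IntervalIntegrable Λ' volume 0 t)
    (hΛderiv : ∀ᵐ t ∂(volume.restrict (Set.Ici (0:ℝ))), HasDerivAt Λ (Λ' t) t)
    (hΛFTC : ∀ t, 0 ≤ t → Λ t = Λ 0 + ∫ s in (0:ℝ)..t, Λ' s)
    (hhint : ∀ s t, 0 ≤ s → s ≤ t → IntervalIntegrable h volume s t)
    (hhbound : ∀ s t, 0 ≤ s → s ≤ t → (∫ τ in s..t, h τ) ≤ η * (t - s) + m)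
    (hineq : ∀ᵐ t ∂(volume.restrict (Set.Ici (0:ℝ))),
      Λ' t + 2 * η * Λ t ≤ h t * Λ t + k) :
    ∀ t, 0 ≤ t →
      Λ t ≤ Λ 0 * Real.exp m * Real.exp (-η * t) + k * Real.exp m / η := by
  intro T hT
  set B : ℝ → ℝ := fun y ↦ 2 * η * y - ∫ τ in (0:ℝ)..y, h τ with hB_def
  have hΛac : AbsolutelyContinuousOnInterval Λ 0 T :=
    ((contDiff_const.add contDiff_id).comp_absolutelyContinuousOnInterval
      ((hΛ'int T hT).absolutelyContinuousOnInterval_intervalIntegral left_mem_uIcc)).congr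
      fun x hx ↦ (hΛFTC x (uIcc_of_le hT ▸ hx).1).symm
  have hBac : AbsolutelyContinuousOnInterval B 0 T :=
    (contDiff_const.mul contDiff_id).contDiffOn.absolutelyContinuousOnInterval.sub
      ((hhint 0 T le_rfl hT).absolutelyContinuousOnInterval_intervalIntegral left_mem_uIcc)
  have hdiff : ∀ᵐ x ∂volume.restrict (Icc 0 T), deriv Λ x + deriv B x * Λ x ≤ k := by
    filter_upwards [ae_restrict_of_ae_restrict_of_subset Icc_subset_Ici_self hΛderiv,
      ae_restrict_of_ae_restrict_of_subset Icc_subset_Ici_self hineq,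
      ae_restrict_hasDerivAt_mul_sub_integral (2 * η) hT (hhint 0 T le_rfl hT)] with x hΛx hx hBx
    rw [hΛx.deriv, hBx.deriv]
    linarith
  have hgrowth := hΛac.mul_exp_sub_le hT hBac hdiff
  have hB : ∀ x ∈ Icc 0 T, B x ≤ B T + m - η * (T - x) := fun x hx ↦ by
    have hbound := hhbound x T hx.1 hx.2
    rw [← intervalIntegral.integral_interval_sub_left (hhint 0 T le_rfl hT)
      (hhint 0 x le_rfl hx.1)] at hbound
    simp only [hB_def]
    linarith
  have hint := integral_exp_le_of_le_sub_mul hη hT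
    (Real.continuous_exp.comp_continuousOn hBac.continuousOn).intervalIntegrable hB
  have hB0 : B 0 = 0 := by simp [hB_def]
  have hBT : η * T - m ≤ B T := by linarith [hB 0 ⟨le_rfl, hT⟩]
  rw [hB0, Real.exp_zero, mul_one] at hgrowth
  refine le_of_mul_le_mul_right ?_ (Real.exp_pos (B T))
  calc Λ T * Real.exp (B T) ≤ Λ 0 + k * (Real.exp (B T + m) / η) := by
        linarith [mul_le_mul_of_nonneg_left hint hk]
    _ ≤ Λ 0 * Real.exp (m - η * T + B T) + k * (Real.exp (B T + m) / η) := by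
        gcongr
        exact le_mul_of_one_le_right (hΛnonneg 0 le_rfl) (Real.one_le_exp (by linarith))
    _ = (Λ 0 * Real.exp m * Real.exp (-η * T) + k * Real.exp m / η) * Real.exp (B T) := by
        rw [Real.exp_add, Real.exp_add, Real.exp_sub, neg_mul, Real.exp_neg]
        field_simp

/-- Grönwall-type inequality (Proposition 5.1 / Appendix of the paper).
Absolute continuity of `Λ` on compact subintervals of `[0,∞)` is encoded through the
existence of an a.e. derivative `Λ'` which is locally integrable and for which the
fundamental theorem of calculus representation holds. -/
theorem gronwall_type_inequality
    (η k m : ℝ) (hη : 0 < η) (hk : 0 ≤ k) (hm : 0 ≤ m)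
    (Λ Λ' h : ℝ → ℝ)
    (hΛnonneg : ∀ t, 0 ≤ t → 0 ≤ Λ t)
    (hΛ'int : ∀ t, 0 ≤ t → IntervalIntegrable Λ' volume 0 t)
    (hΛderiv : ∀ᵐ t ∂(volume.restrict (Set.Ici (0:ℝ))), HasDerivAt Λ (Λ' t) t)
    (hΛFTC : ∀ t, 0 ≤ t → Λ t = Λ 0 + ∫ s in (0:ℝ)..t, Λ' s)
    (hhint : ∀ s t, 0 ≤ s → s ≤ t → IntervalIntegrable h volume s t)
    (hhbound : ∀ s t, 0 ≤ s → s ≤ t → (∫ τ in s..t, h τ) ≤ η * (t - s) + m)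
    (hineq : ∀ᵐ t ∂(volume.restrict (Set.Ici (0:ℝ))),
      Λ' t + 2 * η * Λ t ≤ h t * Λ t + k) :
    ∀ t, 0 ≤ t →
      Λ t ≤ Λ 0 * Real.exp m * Real.exp (-η * t) + k * Real.exp m / η :=
  gronwall_type_inequality_general η k m hη hk Λ Λ' h hΛnonneg hΛ'int hΛderiv hΛFTC hhint hhbound
    hineq
end

section
/- Let f : ℝ → ℝ be continuous and let λ > 0. Assume liminf_{|s|→∞} f(s)/s > −λ. Define F(s) := ∫_0^s f(σ) dσ. Then there exist a constant μ ∈ (0, λ] and a constant c₂ ≥ 0 such that F(s) ≥ −((λ−μ)/2) s² − c₂ for all s ∈ ℝ. -/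
/-- Pointwise form of inequality (2.2): under the sign condition
`liminf_{|s|→∞} f(s)/s > -λ`, the potential `F(s) = ∫_0^s f(σ) dσ` satisfies
`F(s) ≥ -((λ-μ)/2) s² - c₂` for some `μ ∈ (0, λ]` and `c₂ ≥ 0`. The liminf as
`|s| → ∞` is the liminf along the filter `comap |·| atTop`, computed in `EReal`. -/
theorem sign_condition_potential_lower_bound
    (f : ℝ → ℝ) (hf : Continuous f) (lam : ℝ) (hlam : 0 < lam)
    (hliminf : ((-lam : ℝ) : EReal) <
      Filter.liminf (fun s : ℝ => ((f s / s : ℝ) : EReal))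
        (Filter.comap (fun s : ℝ => |s|) Filter.atTop))
    (F : ℝ → ℝ) (hF : ∀ s : ℝ, F s = ∫ σ in (0:ℝ)..s, f σ) :
    ∃ μ c₂ : ℝ, 0 < μ ∧ μ ≤ lam ∧ 0 ≤ c₂ ∧
      ∀ s : ℝ, F s ≥ -((lam - μ) / 2) * s ^ 2 - c₂ := by
  -- pick b' strictly between -lam and the liminf
  obtain ⟨b', hb'1, hb'2⟩ := exists_between hliminf
  have hbt : b' ≠ ⊤ := by
    intro h; rw [h] at hb'2; exact (not_top_lt hb'2).elim
  have hbb : b' ≠ ⊥ := by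
    intro h; rw [h] at hb'1; exact (not_lt_bot hb'1).elim
  set b0 : ℝ := b'.toReal with hb0
  have hb'eq : b' = (b0 : EReal) := (EReal.coe_toReal hbt hbb).symm
  have hb0lam : -lam < b0 := by
    rw [hb'eq] at hb'1; exact_mod_cast hb'1
  set b : ℝ := min b0 0 with hbdef
  have hblam : -lam < b := lt_min hb0lam (by linarith)
  have hb0' : b ≤ 0 := min_le_right _ _
  -- eventually f s / s > b
  have hev : ∀ᶠ s : ℝ in Filter.comap (fun s : ℝ => |s|) Filter.atTop,
      b' < ((f s / s : ℝ) : EReal) :=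
    Filter.eventually_lt_of_lt_liminf hb'2
  rw [Filter.eventually_comap] at hev
  rw [Filter.eventually_atTop] at hev
  obtain ⟨R0, hR0⟩ := hev
  set R : ℝ := max R0 1 with hRdef
  have hR1 : (1:ℝ) ≤ R := le_max_right _ _
  have hRpos : (0:ℝ) < R := lt_of_lt_of_le one_pos hR1
  have key : ∀ s : ℝ, R ≤ |s| → b < f s / s := by
    intro s hs
    have := hR0 |s| (le_trans (le_max_left _ _) hs) s rfl
    rw [hb'eq] at this
    have : b0 < f s / s := by exact_mod_cast this
    exact lt_of_le_of_lt (min_le_left _ _) this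
  have hint : ∀ a c : ℝ, IntervalIntegrable f MeasureTheory.volume a c :=
    fun a c => hf.intervalIntegrable a c
  -- bound F on [-R, R]
  have hFc : Continuous F := by
    have := intervalIntegral.continuous_primitive hint 0
    have heq : F = fun s => ∫ σ in (0:ℝ)..s, f σ := funext hF
    rw [heq]; exact this
  obtain ⟨x₀, _, hx₀⟩ := (isCompact_Icc (a := -R) (b := R)).exists_isMinOn
    (Set.nonempty_Icc.2 (by linarith)) hFc.continuousOn
  set C : ℝ := -(F x₀) with hCdef
  have hC : ∀ s ∈ Set.Icc (-R) R, -C ≤ F s := fun s hs => by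
    have := hx₀ hs; simp only [hCdef, neg_neg]; exact this
  -- interval integral of b * σ
  have hbint : ∀ a c : ℝ, (∫ σ in a..c, b * σ) = b * (c^2/2) - b * (a^2/2) := by
    intro a c
    rw [intervalIntegral.integral_const_mul, integral_id]
    ring
  set M : ℝ := max (-(F R)) (-(F (-R))) with hM
  have hMR : -(F R) ≤ M := le_max_left _ _
  have hMnR : -(F (-R)) ≤ M := le_max_right _ _
  have hC0 : (0:ℝ) ≤ max 0 C := le_max_left _ _
  have hCC : C ≤ max 0 C := le_max_right _ _
  have hM0 : (0:ℝ) ≤ max 0 M := le_max_left _ _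
  have hMM : M ≤ max 0 M := le_max_right _ _
  have hbR : (0:ℝ) ≤ -(b * (R ^ 2 / 2)) := by nlinarith [sq_nonneg R]
  refine ⟨lam + b, max 0 C + max 0 M + -(b * (R ^ 2 / 2)) + 1, by linarith, by linarith,
    by linarith, ?_⟩
  intro s
  have hgoal : -((lam - (lam + b)) / 2) * s ^ 2 = b / 2 * s ^ 2 := by ring
  rw [hgoal]
  rcases le_or_gt (|s|) R with hc | hc
  · -- |s| ≤ R
    have hs : s ∈ Set.Icc (-R) R := abs_le.1 hc
    have h1 : -C ≤ F s := hC s hs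
    have h2 : b / 2 * s ^ 2 ≤ 0 := by nlinarith [sq_nonneg s]
    linarith
  · rcases le_or_gt 0 s with hspos | hsneg
    · -- s > R
      have hsR : R < s := by rwa [abs_of_nonneg hspos] at hc
      have hmono : ∀ σ ∈ Set.Icc R s, b * σ ≤ f σ := by
        intro σ hσ
        have hσpos : 0 < σ := lt_of_lt_of_le hRpos hσ.1
        have hkey : b < f σ / σ := key σ (by rw [abs_of_pos hσpos]; exact hσ.1)
        calc b * σ ≤ (f σ / σ) * σ :=
              mul_le_mul_of_nonneg_right (le_of_lt hkey) (le_of_lt hσpos)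
          _ = f σ := div_mul_cancel₀ _ (ne_of_gt hσpos)
      have hdecomp : F s = F R + ∫ σ in R..s, f σ := by
        rw [hF, hF, intervalIntegral.integral_add_adjacent_intervals (hint 0 R) (hint R s)]
      have hle : (∫ σ in R..s, b * σ) ≤ ∫ σ in R..s, f σ :=
        intervalIntegral.integral_mono_on (le_of_lt hsR)
          ((continuous_const.mul continuous_id).intervalIntegrable R s) (hint R s) hmono
      rw [hbint] at hle
      have hsq : b * (s ^ 2 / 2) = b / 2 * s ^ 2 := by ring
      rw [hsq] at hle
      linarith
    · -- s < -R
      have hsR : s < -R := by rw [abs_of_neg hsneg] at hc; linarith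
      have hmono : ∀ σ ∈ Set.Icc s (-R), f σ ≤ b * σ := by
        intro σ hσ
        have hσneg : σ < 0 := lt_of_le_of_lt hσ.2 (by linarith)
        have hkey : b < f σ / σ := key σ (by rw [abs_of_neg hσneg]; linarith [hσ.2])
        calc f σ = (f σ / σ) * σ := (div_mul_cancel₀ _ (ne_of_lt hσneg)).symm
          _ ≤ b * σ := mul_le_mul_of_nonpos_right (le_of_lt hkey) (le_of_lt hσneg)
      have hdecomp : F (-R) = F s + ∫ σ in s..(-R), f σ := by
        rw [hF, hF, intervalIntegral.integral_add_adjacent_intervals (hint 0 s) (hint s (-R))]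
      have hle : (∫ σ in s..(-R), f σ) ≤ ∫ σ in s..(-R), b * σ :=
        intervalIntegral.integral_mono_on (le_of_lt hsR) (hint s (-R))
          ((continuous_const.mul continuous_id).intervalIntegrable s (-R)) hmono
      rw [hbint] at hle
      have hRsq : b * ((-R) ^ 2 / 2) = b * (R ^ 2 / 2) := by ring
      rw [hRsq] at hle
      have hsq : b * (s ^ 2 / 2) = b / 2 * s ^ 2 := by ring
      rw [hsq] at hle
      linarith
end
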